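/- arXiv:2604.25320 — 2 statements merged into one kernel-verified Lean document; each statement's English description precedes it below -/
import Mathlib

section
/- Let (f_n)_{n≥1} be a sequence of nonconstant holomorphic self-maps of the unit disk 𝔻 whose forward iterates F_n := f_n ∘ ⋯ ∘ f_1 converge locally uniformly on 𝔻 to a holomorphic self-map F of 𝔻. If Σ_{n≥1} (1 − D_h f_n(a)) < ∞ for some a ∈ 𝔻, then Σ_{n≥1} (1 − D_h f_n(b)) < ∞ for every b ∈ 𝔻. -/
/-!
For `w` in the disk let `T_w z = (z - w) / (1 - w̄ z)`. The difference quotient at `0` of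
`T_{g w} ∘ g ∘ T_w⁻¹` is a holomorphic map `φ_w` of the disk into the closed disk with
`|φ_w(w)| = D_h g(w)` and `|φ_a(b)| |T_a b| = |T_{g a}(g b)|`, so that `|φ_a(b)| = |φ_b(a)|`.
Schwarz–Pick for `φ_w` gives the Harnack-type bound `(1 - t)(1 - |φ_w z|) ≤ (1 + t)(1 - |φ_w w|)`,
`t = |T_w z|`. Applied to `φ_a` and `φ_b` and chained through `|φ_a(b)| = |φ_b(a)|`, it yields
`1 - D_h g(b) ≤ ((1 + t)/(1 - t))² (1 - D_h g(a))` with `t = |T_a b|` independent of `g`, and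
summability transfers by comparison.
-/

open Filter Metric Set

noncomputable section

/-- The open unit disk in the complex plane. -/
def unitDisk : Set ℂ := Metric.ball (0 : ℂ) 1

/-- A holomorphic self-map of the unit disk. -/
def IsHolSelfMap (f : ℂ → ℂ) : Prop :=
  DifferentiableOn ℂ f unitDisk ∧ Set.MapsTo f unitDisk unitDisk

/-- The hyperbolic distortion `D_h f (z) = (1 - |z|²)|f′(z)| / (1 - |f(z)|²)`. -/
def hypDist (f : ℂ → ℂ) (z : ℂ) : ℝ :=
  (1 - ‖z‖ ^ 2) * ‖deriv f z‖ / (1 - ‖f z‖ ^ 2)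

open ComplexConjugate

lemma mem_unitDisk {z : ℂ} : z ∈ unitDisk ↔ ‖z‖ < 1 := mem_ball_zero_iff

def diskMobius (c z : ℂ) : ℂ := (z - c) / (1 - conj c * z)

lemma one_sub_conj_mul_ne_zero {c z : ℂ} (hc : ‖c‖ < 1) (hz : ‖z‖ ≤ 1) :
    1 - conj c * z ≠ 0 := by
  have hlt : ‖conj c * z‖ < 1 := by
    rw [norm_mul, Complex.norm_conj]
    exact (mul_le_of_le_one_right (norm_nonneg _) hz).trans_lt hc
  exact sub_ne_zero.2 fun h => by simp [← h] at hlt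

lemma norm_one_sub_conj_mul_sq_sub_norm_sub_sq (c z : ℂ) :
    ‖1 - conj c * z‖ ^ 2 - ‖z - c‖ ^ 2 = (1 - ‖c‖ ^ 2) * (1 - ‖z‖ ^ 2) := by
  simp only [Complex.sq_norm, Complex.normSq_apply, Complex.sub_re, Complex.sub_im,
    Complex.mul_re, Complex.mul_im, Complex.conj_re, Complex.conj_im, Complex.one_re,
    Complex.one_im]
  ring

lemma norm_diskMobius_lt_one {c z : ℂ} (hc : c ∈ unitDisk) (hz : z ∈ unitDisk) :
    ‖diskMobius c z‖ < 1 := by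
  rw [mem_unitDisk] at hc hz
  have hden := norm_pos_iff.2 (one_sub_conj_mul_ne_zero hc hz.le)
  rw [diskMobius, norm_div, div_lt_one hden]
  refine lt_of_pow_lt_pow_left₀ 2 hden.le ?_
  have hpos : 0 < (1 - ‖c‖ ^ 2) * (1 - ‖z‖ ^ 2) := by
    apply mul_pos <;> nlinarith [norm_nonneg c, norm_nonneg z]
  linarith [norm_one_sub_conj_mul_sq_sub_norm_sub_sq c z]

@[simp]
lemma diskMobius_self (c : ℂ) : diskMobius c c = 0 := by simp [diskMobius]

@[simp]
lemma diskMobius_neg_zero (c : ℂ) : diskMobius (-c) 0 = c := by simp [diskMobius]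

lemma diskMobius_neg_diskMobius {c z : ℂ} (hc : c ∈ unitDisk) (hz : z ∈ unitDisk) :
    diskMobius (-c) (diskMobius c z) = z := by
  rw [mem_unitDisk] at hc hz
  have hz' := one_sub_conj_mul_ne_zero hc hz.le
  have hc' := one_sub_conj_mul_ne_zero hc hc.le
  have hnum : diskMobius c z - -c = z * (1 - conj c * c) / (1 - conj c * z) := by
    rw [diskMobius, eq_div_iff hz', sub_mul, div_mul_cancel₀ _ hz']; ring
  have hden : 1 - conj (-c) * diskMobius c z = (1 - conj c * c) / (1 - conj c * z) := by
    rw [diskMobius, eq_div_iff hz', sub_mul, map_neg, neg_mul, neg_mul, mul_assoc,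
      div_mul_cancel₀ _ hz']; ring
  rw [diskMobius, hnum, hden, div_div_div_cancel_right₀ hz', mul_div_cancel_right₀ _ hc']

lemma norm_diskMobius_comm (a b : ℂ) : ‖diskMobius a b‖ = ‖diskMobius b a‖ := by
  rw [diskMobius, diskMobius, norm_div, norm_div, norm_sub_rev,
    ← Complex.norm_conj (1 - conj b * a)]
  simp [mul_comm]

lemma norm_sub_eq_norm_diskMobius_mul {c z : ℂ} (hc : c ∈ unitDisk) (hz : z ∈ unitDisk) :
    ‖z - c‖ = ‖diskMobius c z‖ * ‖1 - conj c * z‖ := by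
  rw [mem_unitDisk] at hc hz
  rw [diskMobius, norm_div, div_mul_cancel₀]
  exact norm_ne_zero_iff.2 (one_sub_conj_mul_ne_zero hc hz.le)

lemma hasDerivAt_diskMobius {c z : ℂ} (hz : 1 - conj c * z ≠ 0) :
    HasDerivAt (diskMobius c) ((1 - conj c * c) / (1 - conj c * z) ^ 2) z := by
  have hnum : HasDerivAt (fun z : ℂ => z - c) 1 z := (hasDerivAt_id z).sub_const c
  have hden : HasDerivAt (fun z : ℂ => 1 - conj c * z) (-conj c) z := by
    simpa using ((hasDerivAt_id z).const_mul (conj c)).const_sub 1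
  exact (hnum.div hden hz).congr_deriv (by ring)

lemma isHolSelfMap_diskMobius {c : ℂ} (hc : c ∈ unitDisk) : IsHolSelfMap (diskMobius c) := by
  refine ⟨fun z hz => ?_, fun z hz => mem_unitDisk.2 (norm_diskMobius_lt_one hc hz)⟩
  rw [mem_unitDisk] at hc hz
  exact (hasDerivAt_diskMobius (one_sub_conj_mul_ne_zero hc hz.le)).differentiableAt
    |>.differentiableWithinAt

lemma IsHolSelfMap.comp {f g : ℂ → ℂ} (hg : IsHolSelfMap g) (hf : IsHolSelfMap f) :
    IsHolSelfMap (g ∘ f) :=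
  ⟨hg.1.comp hf.1 hf.2, hg.2.comp hf.2⟩

def recenter (g : ℂ → ℂ) (w : ℂ) : ℂ → ℂ := diskMobius (g w) ∘ g ∘ diskMobius (-w)

lemma IsHolSelfMap.recenter {g : ℂ → ℂ} (hg : IsHolSelfMap g) {w : ℂ} (hw : w ∈ unitDisk) :
    IsHolSelfMap (recenter g w) :=
  (isHolSelfMap_diskMobius (hg.2 hw)).comp
    (hg.comp (isHolSelfMap_diskMobius (by simpa [mem_unitDisk] using hw)))

@[simp]
lemma recenter_zero (g : ℂ → ℂ) (w : ℂ) : recenter g w 0 = 0 := by simp [recenter]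

lemma recenter_diskMobius (g : ℂ → ℂ) {w z : ℂ} (hw : w ∈ unitDisk) (hz : z ∈ unitDisk) :
    recenter g w (diskMobius w z) = diskMobius (g w) (g z) := by
  simp [recenter, diskMobius_neg_diskMobius hw hz]

lemma norm_deriv_recenter_zero {g : ℂ → ℂ} (hg : IsHolSelfMap g) {w : ℂ} (hw : w ∈ unitDisk) :
    ‖deriv (recenter g w) 0‖ = hypDist g w := by
  have hgw := mem_unitDisk.1 (hg.2 hw)
  have h1 : HasDerivAt (diskMobius (-w)) (1 - conj w * w) 0 := by
    simpa using hasDerivAt_diskMobius (c := -w) (z := 0) (by simp)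
  have h2 : HasDerivAt g (deriv g w) (diskMobius (-w) 0) := by
    rw [diskMobius_neg_zero]
    exact (hg.1.differentiableAt (isOpen_ball.mem_nhds hw)).hasDerivAt
  have h3 : HasDerivAt (diskMobius (g w)) (1 - conj (g w) * g w)⁻¹ (g (diskMobius (-w) 0)) := by
    have hne := one_sub_conj_mul_ne_zero hgw hgw.le
    rw [diskMobius_neg_zero]
    convert hasDerivAt_diskMobius hne using 1
    field_simp
  have hreal (u : ℂ) : 1 - conj u * u = ((1 - ‖u‖ ^ 2 : ℝ) : ℂ) := by
    rw [Complex.conj_mul']; push_cast; ring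
  rw [recenter, (h3.comp 0 (h2.comp 0 h1)).deriv, hreal, hreal, norm_mul, norm_mul, norm_inv,
    Complex.norm_real, Complex.norm_real, Real.norm_of_nonneg, Real.norm_of_nonneg, hypDist]
  · ring
  all_goals nlinarith [norm_nonneg w, norm_nonneg (g w), mem_unitDisk.1 hw]

/-- **Schwarz–Pick lemma**. -/
lemma IsHolSelfMap.norm_diskMobius_le {g : ℂ → ℂ} (hg : IsHolSelfMap g) {w z : ℂ}
    (hw : w ∈ unitDisk) (hz : z ∈ unitDisk) :
    ‖diskMobius (g w) (g z)‖ ≤ ‖diskMobius w z‖ := by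
  rw [← recenter_diskMobius g hw hz]
  exact Complex.norm_le_norm_of_mapsTo_ball (hg.recenter hw).1
    ((hg.recenter hw).2.mono_right ball_subset_closedBall) (recenter_zero g w)
    (norm_diskMobius_lt_one hw hz)

lemma norm_sub_le_of_mapsTo_closedBall {g : ℂ → ℂ} (hd : DifferentiableOn ℂ g unitDisk)
    (hb : MapsTo g unitDisk (closedBall 0 1)) {w z : ℂ} (hw : w ∈ unitDisk) (hz : z ∈ unitDisk) :
    ‖g z - g w‖ ≤ ‖diskMobius w z‖ * ‖1 - conj (g w) * g z‖ := by
  by_cases hg : MapsTo g unitDisk unitDisk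
  · rw [norm_sub_eq_norm_diskMobius_mul (hg hw) (hg hz)]
    gcongr
    exact IsHolSelfMap.norm_diskMobius_le ⟨hd, hg⟩ hw hz
  · -- maximum modulus: `‖g‖` attains its bound `1` inside the disk, so `g` is constant
    obtain ⟨u, hu, hgu⟩ : ∃ u ∈ unitDisk, ¬ ‖g u‖ < 1 := by
      simpa [MapsTo, mem_unitDisk] using hg
    have hmax : IsMaxOn (norm ∘ g) unitDisk u := fun v hv =>
      (mem_closedBall_zero_iff.1 (hb hv)).trans (not_lt.1 hgu)
    have hconst := Complex.eqOn_of_isPreconnected_of_isMaxOn_norm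
      (convex_ball 0 1).isPreconnected isOpen_ball hd hu hmax
    simp only [hconst hz, hconst hw, Function.const_apply, sub_self, norm_zero]
    positivity

def schwarzQuotient (g : ℂ → ℂ) (w z : ℂ) : ℂ := dslope (recenter g w) 0 (diskMobius w z)

lemma differentiableOn_schwarzQuotient {g : ℂ → ℂ} (hg : IsHolSelfMap g) {w : ℂ}
    (hw : w ∈ unitDisk) : DifferentiableOn ℂ (schwarzQuotient g w) unitDisk :=
  ((Complex.differentiableOn_dslope (isOpen_ball.mem_nhds (mem_ball_self one_pos))).2
    (hg.recenter hw).1).comp (isHolSelfMap_diskMobius hw).1 (isHolSelfMap_diskMobius hw).2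

lemma mapsTo_schwarzQuotient {g : ℂ → ℂ} (hg : IsHolSelfMap g) {w : ℂ} (hw : w ∈ unitDisk) :
    MapsTo (schwarzQuotient g w) unitDisk (closedBall 0 1) := by
  intro z hz
  have hmaps : MapsTo (recenter g w) (ball 0 1) (closedBall (recenter g w 0) 1) := by
    rw [recenter_zero]; exact (hg.recenter hw).2.mono_right ball_subset_closedBall
  simpa [schwarzQuotient] using Complex.norm_dslope_le_div_of_mapsTo_ball (hg.recenter hw).1
    hmaps ((isHolSelfMap_diskMobius hw).2 hz)

lemma norm_schwarzQuotient_self {g : ℂ → ℂ} (hg : IsHolSelfMap g) {w : ℂ} (hw : w ∈ unitDisk) :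
    ‖schwarzQuotient g w w‖ = hypDist g w := by
  rw [schwarzQuotient, diskMobius_self, dslope_same, norm_deriv_recenter_zero hg hw]

lemma norm_schwarzQuotient_mul (g : ℂ → ℂ) {w z : ℂ} (hw : w ∈ unitDisk) (hz : z ∈ unitDisk) :
    ‖schwarzQuotient g w z‖ * ‖diskMobius w z‖ = ‖diskMobius (g w) (g z)‖ := by
  rcases eq_or_ne z w with rfl | hne
  · simp
  have hT : diskMobius w z ≠ 0 := div_ne_zero (sub_ne_zero.2 hne)
    (one_sub_conj_mul_ne_zero (mem_unitDisk.1 hw) (mem_unitDisk.1 hz).le)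
  rw [schwarzQuotient, dslope_of_ne _ hT, slope_def_field, recenter_zero, sub_zero, sub_zero,
    recenter_diskMobius g hw hz, norm_div, div_mul_cancel₀ _ (norm_ne_zero_iff.2 hT)]

lemma norm_schwarzQuotient_comm (g : ℂ → ℂ) {a b : ℂ} (ha : a ∈ unitDisk) (hb : b ∈ unitDisk) :
    ‖schwarzQuotient g b a‖ = ‖schwarzQuotient g a b‖ := by
  rcases eq_or_ne a b with rfl | hne
  · rfl
  have hT : ‖diskMobius a b‖ ≠ 0 := norm_ne_zero_iff.2 <| div_ne_zero (sub_ne_zero.2 hne.symm)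
    (one_sub_conj_mul_ne_zero (mem_unitDisk.1 ha) (mem_unitDisk.1 hb).le)
  refine mul_right_cancel₀ hT ?_
  rw [norm_schwarzQuotient_mul g ha hb, norm_diskMobius_comm, norm_schwarzQuotient_mul g hb ha,
    norm_diskMobius_comm]

lemma abs_norm_sub_norm_le_of_norm_sub_le {u v : ℂ} {t : ℝ} (hu : ‖u‖ ≤ 1) (hv : ‖v‖ ≤ 1)
    (ht : 0 ≤ t) (h : ‖v - u‖ ≤ t * ‖1 - conj u * v‖) :
    |‖u‖ - ‖v‖| ≤ t * (1 - ‖u‖ * ‖v‖) := by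
  set m := ‖u‖
  set n := ‖v‖
  have hgap := norm_one_sub_conj_mul_sq_sub_norm_sub_sq u v
  have hP : 0 ≤ (1 - m ^ 2) * (1 - n ^ 2) := by
    apply mul_nonneg <;> nlinarith [norm_nonneg u, norm_nonneg v]
  have hx : (m - n) ^ 2 ≤ ‖v - u‖ ^ 2 := by
    rw [← sq_abs, norm_sub_rev]
    exact pow_le_pow_left₀ (abs_nonneg _) (abs_norm_sub_norm_le u v) 2
  have hX : ‖v - u‖ ^ 2 ≤ t ^ 2 * ‖1 - conj u * v‖ ^ 2 := by
    rw [← mul_pow]; exact pow_le_pow_left₀ (norm_nonneg _) h 2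
  have hsq : (m - n) ^ 2 ≤ (t * (1 - m * n)) ^ 2 := by
    -- `‖1 - ū v‖² - ‖v - u‖² = (1 - m n)² - (m - n)² ≥ 0`, while `(m - n)² ≤ ‖v - u‖²`
    have hcross : (m - n) ^ 2 * ‖1 - conj u * v‖ ^ 2 ≤ ‖v - u‖ ^ 2 * (1 - m * n) ^ 2 := by
      nlinarith
    rcases (sq_nonneg ‖1 - conj u * v‖).eq_or_lt with hY | hY
    · nlinarith
    · rw [mul_pow]
      nlinarith
  have hmn : 0 ≤ 1 - m * n := by nlinarith [norm_nonneg u, norm_nonneg v]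
  rw [← abs_of_nonneg (mul_nonneg ht hmn)]
  exact sq_le_sq.1 hsq

lemma one_sub_mul_one_sub_le_of_abs_sub_le {x y t : ℝ} (hx : x ≤ 1) (hy : y ≤ 1)
    (ht : 0 ≤ t) (h : |x - y| ≤ t * (1 - x * y)) : (1 - t) * (1 - y) ≤ (1 + t) * (1 - x) := by
  nlinarith [(abs_le.1 h).2, mul_nonneg (mul_nonneg ht (sub_nonneg.2 hy)) (sub_nonneg.2 hx)]

lemma one_sub_norm_le_of_mapsTo_closedBall {φ : ℂ → ℂ} (hd : DifferentiableOn ℂ φ unitDisk)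
    (hb : MapsTo φ unitDisk (closedBall 0 1)) {w z : ℂ} (hw : w ∈ unitDisk) (hz : z ∈ unitDisk) :
    (1 - ‖diskMobius w z‖) * (1 - ‖φ z‖) ≤ (1 + ‖diskMobius w z‖) * (1 - ‖φ w‖) := by
  have hφw := mem_closedBall_zero_iff.1 (hb hw)
  have hφz := mem_closedBall_zero_iff.1 (hb hz)
  exact one_sub_mul_one_sub_le_of_abs_sub_le hφw hφz (norm_nonneg _)
    (abs_norm_sub_norm_le_of_norm_sub_le hφw hφz (norm_nonneg _)
      (norm_sub_le_of_mapsTo_closedBall hd hb hw hz))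

lemma hypDist_le_one {g : ℂ → ℂ} (hg : IsHolSelfMap g) {w : ℂ} (hw : w ∈ unitDisk) :
    hypDist g w ≤ 1 := by
  rw [← norm_schwarzQuotient_self hg hw]
  exact mem_closedBall_zero_iff.1 (mapsTo_schwarzQuotient hg hw hw)

lemma one_sub_hypDist_le {g : ℂ → ℂ} (hg : IsHolSelfMap g) {a b : ℂ} (ha : a ∈ unitDisk)
    (hb : b ∈ unitDisk) :
    1 - hypDist g b ≤
      ((1 + ‖diskMobius a b‖) / (1 - ‖diskMobius a b‖)) ^ 2 * (1 - hypDist g a) := by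
  set t := ‖diskMobius a b‖
  have ht : t < 1 := norm_diskMobius_lt_one ha hb
  -- compare both distortions with the common value `‖φ_a b‖ = ‖φ_b a‖`
  have hA := one_sub_norm_le_of_mapsTo_closedBall (differentiableOn_schwarzQuotient hg ha)
    (mapsTo_schwarzQuotient hg ha) ha hb
  have hB := one_sub_norm_le_of_mapsTo_closedBall (differentiableOn_schwarzQuotient hg hb)
    (mapsTo_schwarzQuotient hg hb) ha hb
  rw [norm_schwarzQuotient_self hg ha] at hA
  rw [norm_schwarzQuotient_self hg hb, norm_schwarzQuotient_comm g ha hb] at hB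
  rw [div_pow, div_mul_eq_mul_div, le_div_iff₀ (by nlinarith)]
  nlinarith [mul_le_mul_of_nonneg_left hB (by linarith : (0 : ℝ) ≤ 1 - t),
    mul_le_mul_of_nonneg_left hA (by positivity : (0 : ℝ) ≤ 1 + t)]

theorem stmt_1_general
    (f : ℕ → ℂ → ℂ)
    (hf : ∀ n : ℕ, IsHolSelfMap (f (n + 1)))
    (a : ℂ) (ha : a ∈ unitDisk)
    (hsum : Summable (fun n : ℕ => 1 - hypDist (f (n + 1)) a)) :
    ∀ b ∈ unitDisk, Summable (fun n : ℕ => 1 - hypDist (f (n + 1)) b) := by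
  intro b hb
  exact Summable.of_nonneg_of_le (fun n => sub_nonneg.2 (hypDist_le_one (hf n) hb))
    (fun n => one_sub_hypDist_le (hf n) ha hb) (hsum.mul_left _)

/-- If the forward iterates of nonconstant holomorphic self-maps `(f n)`
of the unit disk converge locally uniformly to a holomorphic self-map and
`∑ (1 - D_h (f n) a) < ∞` for some `a` in the disk, then `∑ (1 - D_h (f n) b) < ∞`
for every `b` in the disk. -/
theorem stmt_1
    (f F : ℕ → ℂ → ℂ) (Flim : ℂ → ℂ)
    (hf : ∀ n : ℕ, IsHolSelfMap (f (n + 1)))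
    (hfnc : ∀ n : ℕ, ∃ z ∈ unitDisk, ∃ w ∈ unitDisk, f (n + 1) z ≠ f (n + 1) w)
    (hF0 : ∀ z, F 0 z = z)
    (hFrec : ∀ n z, F (n + 1) z = f (n + 1) (F n z))
    (hFlim : IsHolSelfMap Flim)
    (hconv : TendstoLocallyUniformlyOn F Flim atTop unitDisk)
    (a : ℂ) (ha : a ∈ unitDisk)
    (hsum : Summable (fun n : ℕ => 1 - hypDist (f (n + 1)) a)) :
    ∀ b ∈ unitDisk, Summable (fun n : ℕ => 1 - hypDist (f (n + 1)) b) :=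
  stmt_1_general f hf a ha hsum
end
end

section
/- Let (f_n)_{n≥1} be a sequence of holomorphic self-maps of the unit disk 𝔻 whose forward iterates F_n := f_n ∘ ⋯ ∘ f_1 converge locally uniformly on 𝔻 to a nonconstant holomorphic self-map F of 𝔻. Let K_n := ord_0(F_n − F_n(0)) and K := ord_0(F − F(0)). Then the sequence (K_n) is nondecreasing and there exists N such that K_n = K for all n ≥ N. -/
open Filter Metric Set

noncomputable section

/-- The order of vanishing of `g` at `w`: the least `k` such that the `k`-th derivative of
`g` at `w` is nonzero (`⊤` if all derivatives vanish). -/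
def ordAt (g : ℂ → ℂ) (w : ℂ) : ℕ∞ :=
  sInf {n : ℕ∞ | ∃ k : ℕ, (k : ℕ∞) = n ∧ iteratedDeriv k g w ≠ 0}

/-!
Writing `F_{n+1} = f_{n+1} ∘ F_n`, the order of `F_{n+1} - F_{n+1}(0)` at `0` is the order of
`F_n - F_n(0)` times the (positive) local degree of `f_{n+1}` at `F_n(0)`, so the orders increase.

For the stabilisation, a zero of `F_n - F_n(0)` is a zero of all later iterates and hence of
`Flim - Flim(0)`. On a small circle around `0` on which `Flim - Flim(0)` does not vanish, the
argument principle writes `2πi` times the orders as the circle integrals of the logarithmic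
derivatives. These integrals converge, since derivatives of holomorphic functions converge
locally uniformly together with the functions; and a convergent sequence of integers is
eventually constant.
-/

open Topology Complex Real

theorem ordAt_eq_analyticOrderAt {g : ℂ → ℂ} {w : ℂ} (hg : AnalyticAt ℂ g w) :
    ordAt g w = analyticOrderAt g w := by
  refine le_antisymm (ENat.forall_natCast_le_iff_le.mp fun n hn => ?_) (le_sInf ?_)
  · refine (natCast_le_analyticOrderAt_iff_iteratedDeriv_eq_zero hg).mpr fun i hi => ?_
    by_contra hne
    exact absurd (hn.trans (sInf_le ⟨i, rfl, hne⟩)) (by exact_mod_cast hi.not_ge)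
  · rintro _ ⟨k, rfl, hk⟩
    by_contra! hlt
    exact hk ((natCast_le_analyticOrderAt_iff_iteratedDeriv_eq_zero hg).mp
      (Order.add_one_le_of_lt hlt) k (Nat.lt_succ_self k))

section Order

variable {𝕜 : Type*} [NontriviallyNormedField 𝕜]

theorem analyticOrderAt_sub_self_le_comp {f g : 𝕜 → 𝕜} {z₀ : 𝕜} (hf : AnalyticAt 𝕜 f (g z₀))
    (hg : AnalyticAt 𝕜 g z₀) :
    analyticOrderAt (fun z => g z - g z₀) z₀ ≤
      analyticOrderAt (fun z => f (g z) - f (g z₀)) z₀ := by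
  have hcomp := AnalyticAt.analyticOrderAt_comp (f := fun w => f w - f (g z₀))
    (hf.sub analyticAt_const) hg
  rw [Function.comp_def] at hcomp
  rw [hcomp]
  refine le_mul_of_one_le_left' (Order.one_le_iff_ne_zero.mpr ?_)
  rw [analyticOrderAt_ne_zero]
  exact ⟨hf.sub analyticAt_const, sub_self _⟩

theorem AnalyticOnNhd.exists_eq_sub_pow_mul {g : 𝕜 → 𝕜} {s : Set 𝕜} {c : 𝕜} {k : ℕ}
    (hg : AnalyticOnNhd 𝕜 g s) (hc : c ∈ s) (hk : analyticOrderAt g c = k) :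
    ∃ u : 𝕜 → 𝕜, AnalyticOnNhd 𝕜 u s ∧ u c ≠ 0 ∧ ∀ z, g z = (z - c) ^ k * u z := by
  classical
  obtain ⟨u₀, hu₀, hu₀c, hgu₀⟩ := (hg c hc).analyticOrderAt_eq_natCast.mp hk
  refine ⟨Function.update (fun z => g z / (z - c) ^ k) c (u₀ c), fun z hz => ?_, by simpa, ?_⟩
  · rcases eq_or_ne z c with rfl | hzc
    · refine hu₀.congr ?_
      filter_upwards [hgu₀] with w hw
      rcases eq_or_ne w z with rfl | hwz
      · simp
      · rw [Function.update_of_ne hwz, hw, smul_eq_mul,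
          mul_div_cancel_left₀ _ (pow_ne_zero _ (sub_ne_zero.mpr hwz))]
    · refine ((hg z hz).div ((analyticAt_id.sub analyticAt_const).pow k)
        (pow_ne_zero _ (sub_ne_zero.mpr hzc))).congr ?_
      filter_upwards [eventually_ne_nhds hzc] with w hw
      rw [Function.update_of_ne hw]
      rfl
  · intro z
    rcases eq_or_ne z c with rfl | hzc
    · simpa using hgu₀.self_of_nhds
    · rw [Function.update_of_ne hzc, mul_div_cancel₀ _ (pow_ne_zero _ (sub_ne_zero.mpr hzc))]

theorem AnalyticAt.exists_closedBall_ne_zero {g : 𝕜 → 𝕜} {c : 𝕜} {U : Set 𝕜}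
    (hg : AnalyticAt 𝕜 g c) (hfin : analyticOrderAt g c ≠ ⊤) (hU : U ∈ 𝓝 c) :
    ∃ r > 0, closedBall c r ⊆ U ∧ ∀ z ∈ closedBall c r, z ≠ c → g z ≠ 0 := by
  have hisol : ∀ᶠ z in 𝓝[≠] c, g z ≠ 0 :=
    hg.eventually_eq_zero_or_eventually_ne_zero.resolve_left
      fun h => hfin (analyticOrderAt_eq_top.mpr h)
  obtain ⟨r, hr, hball⟩ := nhds_basis_closedBall.eventually_iff.mp
    ((eventually_mem_set.mpr hU).and (eventually_nhdsWithin_iff.mp hisol))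
  exact ⟨r, hr, fun z hz => (hball hz).1, fun z hz => (hball hz).2⟩

theorem AnalyticOnNhd.analyticOrderAt_sub_self_ne_top {g : 𝕜 → 𝕜} {U : Set 𝕜}
    (hg : AnalyticOnNhd 𝕜 g U) (hU : IsPreconnected U) {c z w : 𝕜} (hc : c ∈ U) (hz : z ∈ U)
    (hw : w ∈ U) (hzw : g z ≠ g w) :
    analyticOrderAt (fun x => g x - g c) c ≠ ⊤ := by
  obtain ⟨x, hx, hxc⟩ : ∃ x ∈ U, g x ≠ g c := by
    by_cases hzc : g z = g c
    · exact ⟨w, hw, hzc ▸ hzw.symm⟩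
    · exact ⟨z, hz, hzc⟩
  refine AnalyticOnNhd.analyticOrderAt_ne_top_of_isPreconnected (f := fun x => g x - g c)
    (fun x hx => (hg x hx).sub analyticAt_const) hU hx hc ?_
  rw [(analyticOrderAt_eq_zero (f := fun x => g x - g c)).mpr (.inr (sub_ne_zero.mpr hxc))]
  exact ENat.zero_ne_top

end Order

theorem circleIntegral_logDeriv_eq_analyticOrderNatAt {g : ℂ → ℂ} {c : ℂ} {r : ℝ}
    (hr : 0 < r) (hg : AnalyticOnNhd ℂ g (closedBall c r))
    (hne : ∀ z ∈ closedBall c r, z ≠ c → g z ≠ 0) (hfin : analyticOrderAt g c ≠ ⊤) :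
    ∮ z in C(c, r), logDeriv g z = 2 * π * I * analyticOrderNatAt g c := by
  set k := analyticOrderNatAt g c
  obtain ⟨u, hu, huc, hgu⟩ :=
    hg.exists_eq_sub_pow_mul (mem_closedBall_self hr.le) (Nat.cast_analyticOrderNatAt hfin).symm
  have hu0 : ∀ z ∈ closedBall c r, u z ≠ 0 := by
    intro z hz huz
    rcases eq_or_ne z c with rfl | hzc
    · exact huc huz
    · exact hne z hz hzc (by rw [hgu, huz, mul_zero])
  have hsplit : EqOn (logDeriv g) (fun z => k * (z - c)⁻¹ + logDeriv u z) (sphere c r) := by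
    intro z hz
    have hzc : z - c ≠ 0 := sub_ne_zero.mpr (ne_of_mem_sphere hz hr.ne')
    have hz' := sphere_subset_closedBall hz
    rw [funext hgu, logDeriv_mul (f := fun z => (z - c) ^ k) z (pow_ne_zero _ hzc) (hu0 z hz')
        ((differentiableAt_id.sub_const c).pow k) (hu z hz').differentiableAt,
      logDeriv_fun_pow (f := fun z => z - c) (differentiableAt_id.sub_const c), logDeriv_apply,
      deriv_sub_const, deriv_id'', one_div]
  have hlogDeriv_u : DifferentiableOn ℂ (logDeriv u) (closedBall c r) :=
    hu.deriv.differentiableOn.div hu.differentiableOn hu0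
  have hpole : ContinuousOn (fun z => (k : ℂ) * (z - c)⁻¹) (sphere c r) :=
    continuousOn_const.mul ((continuousOn_id.sub continuousOn_const).inv₀ fun z hz =>
      sub_ne_zero.mpr (ne_of_mem_sphere hz hr.ne'))
  rw [circleIntegral.integral_congr hr.le hsplit, circleIntegral.integral_add
    (hpole.circleIntegrable hr.le)
    ((hlogDeriv_u.continuousOn.mono sphere_subset_closedBall).circleIntegrable hr.le),
    (hlogDeriv_u.mono closure_ball_subset_closedBall).diffContOnCl.circleIntegral_eq_zero hr.le,
    add_zero, circleIntegral.integral_const_mul,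
    circleIntegral.integral_sub_inv_of_mem_ball (mem_ball_self hr)]
  ring

theorem eventually_eq_of_tendsto_natCast {ι : Type*} {l : Filter ι} {k : ι → ℕ} {K : ℕ}
    (h : Tendsto (fun n => (k n : ℂ)) l (𝓝 K)) : ∀ᶠ n in l, k n = K := by
  have hre : Tendsto (fun n => (k n : ℝ)) l (𝓝 K) := by
    simpa [Function.comp_def] using (continuous_re.tendsto _).comp h
  rw [← Function.comp_def, ← Nat.isClosedEmbedding_coe_real.tendsto_nhds_iff,
    nhds_discrete] at hre
  exact tendsto_pure.mp hre

section LocallyUniformLimit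

variable {ι : Type*} {l : Filter ι} [l.NeBot] {G : ι → ℂ → ℂ} {g : ℂ → ℂ} {U : Set ℂ}

theorem TendstoLocallyUniformlyOn.logDeriv_of_ne_zero (hU : IsOpen U)
    (hG : TendstoLocallyUniformlyOn G g l U) (hGd : ∀ᶠ n in l, DifferentiableOn ℂ (G n) U)
    (hg : ∀ z ∈ U, g z ≠ 0) :
    TendstoLocallyUniformlyOn (fun n => logDeriv (G n)) (logDeriv g) l U := by
  have hgd := hG.differentiableOn hGd hU
  exact (hG.deriv hGd hU).div₀ hG (hgd.analyticOnNhd hU).deriv.continuousOn hgd.continuousOn hg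

variable [l.IsCountablyGenerated]

theorem TendstoLocallyUniformlyOn.tendsto_circleIntegral_logDeriv {c : ℂ} {r : ℝ}
    (hU : IsOpen U) (hG : TendstoLocallyUniformlyOn G g l U)
    (hGd : ∀ᶠ n in l, DifferentiableOn ℂ (G n) U) (hr : 0 ≤ r) (hsphere : sphere c r ⊆ U)
    (hGne : ∀ᶠ n in l, ∀ z ∈ sphere c r, G n z ≠ 0) (hgne : ∀ z ∈ sphere c r, g z ≠ 0) :
    Tendsto (fun n => ∮ z in C(c, r), logDeriv (G n) z) l
      (𝓝 (∮ z in C(c, r), logDeriv g z)) := by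
  set V := U ∩ g ⁻¹' {0}ᶜ
  have hV : IsOpen V :=
    (hG.differentiableOn hGd hU).continuousOn.isOpen_inter_preimage hU isOpen_compl_singleton
  have hVU : V ⊆ U := inter_subset_left
  refine TendstoUniformlyOn.tendsto_circleIntegral_of_continuousOn hr ?_
    ((tendstoLocallyUniformlyOn_iff_forall_isCompact hV).mp
      ((hG.mono hVU).logDeriv_of_ne_zero hV (hGd.mono fun n h => h.mono hVU) fun z hz => hz.2) _
      (fun z hz => ⟨hsphere hz, hgne z hz⟩) (isCompact_sphere c r))
  filter_upwards [hGd, hGne] with n hd hne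
  have han := hd.analyticOnNhd hU
  exact (han.deriv.continuousOn.mono hsphere).div (han.continuousOn.mono hsphere) hne

theorem eventually_analyticOrderAt_eq_of_tendstoLocallyUniformlyOn {c : ℂ} (hU : IsOpen U)
    (hc : c ∈ U) (hG : TendstoLocallyUniformlyOn G g l U)
    (hGd : ∀ᶠ n in l, DifferentiableOn ℂ (G n) U)
    (hzeros : ∀ᶠ n in l, ∀ z ∈ U, G n z = 0 → g z = 0) (hg : analyticOrderAt g c ≠ ⊤) :
    ∀ᶠ n in l, analyticOrderAt (G n) c = analyticOrderAt g c := by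
  have hgan : AnalyticOnNhd ℂ g U := (hG.differentiableOn hGd hU).analyticOnNhd hU
  obtain ⟨r, hr, hballU, hgne⟩ := (hgan c hc).exists_closedBall_ne_zero hg (hU.mem_nhds hc)
  have hGne : ∀ᶠ n in l, ∀ z ∈ closedBall c r, z ≠ c → G n z ≠ 0 := by
    filter_upwards [hzeros] with n hn z hz hzc hGz
    exact hgne z hz hzc (hn z (hballU hz) hGz)
  have hGfin : ∀ᶠ n in l, analyticOrderAt (G n) c ≠ ⊤ := by
    filter_upwards [hzeros] with n hn htop
    refine hg (analyticOrderAt_eq_top.mpr ?_)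
    filter_upwards [analyticOrderAt_eq_top.mp htop, hU.mem_nhds hc] with z hz hzU
    exact hn z hzU hz
  have hint : ∀ᶠ n in l, ∮ z in C(c, r), logDeriv (G n) z =
      2 * π * I * analyticOrderNatAt (G n) c := by
    filter_upwards [hGd, hGne, hGfin] with n hd hne hfin
    exact circleIntegral_logDeriv_eq_analyticOrderNatAt hr
      ((hd.analyticOnNhd hU).mono hballU) hne hfin
  have hlim := hG.tendsto_circleIntegral_logDeriv hU hGd hr.le
    (sphere_subset_closedBall.trans hballU)
    (hGne.mono fun n h z hz => h z (sphere_subset_closedBall hz) (ne_of_mem_sphere hz hr.ne'))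
    fun z hz => hgne z (sphere_subset_closedBall hz) (ne_of_mem_sphere hz hr.ne')
  rw [circleIntegral_logDeriv_eq_analyticOrderNatAt hr (hgan.mono hballU) hgne hg] at hlim
  have hnat : ∀ᶠ n in l, analyticOrderNatAt (G n) c = analyticOrderNatAt g c := by
    refine eventually_eq_of_tendsto_natCast ?_
    simpa only [inv_mul_cancel_left₀ two_pi_I_ne_zero] using
      (hlim.congr' hint).const_mul (2 * π * I)⁻¹
  filter_upwards [hnat, hGfin] with n hn hfin
  rw [← Nat.cast_analyticOrderNatAt hfin, ← Nat.cast_analyticOrderNatAt hg, hn]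

end LocallyUniformLimit

section ForwardIterates

variable {f F : ℕ → ℂ → ℂ}

theorem isHolSelfMap_of_forward_iterates (hf : ∀ n : ℕ, IsHolSelfMap (f (n + 1)))
    (hF0 : ∀ z, F 0 z = z) (hFrec : ∀ n z, F (n + 1) z = f (n + 1) (F n z)) (n : ℕ) :
    IsHolSelfMap (F n) := by
  induction n with
  | zero => rw [funext hF0]; exact ⟨differentiableOn_id, mapsTo_id _⟩
  | succ n ih =>
    rw [funext (hFrec n)]
    exact ⟨(hf n).1.comp ih.1 ih.2, (hf n).2.comp ih.2⟩

theorem eq_of_tendsto_forward_iterates (hFrec : ∀ n z, F (n + 1) z = f (n + 1) (F n z))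
    {z w a b : ℂ} (hz : Tendsto (fun n => F n z) atTop (𝓝 a))
    (hw : Tendsto (fun n => F n w) atTop (𝓝 b)) {m : ℕ} (hm : F m z = F m w) : a = b := by
  have hfrom : ∀ n ≥ m, F n z = F n w := fun n hn => by
    induction n, hn using Nat.le_induction with
    | base => exact hm
    | succ n _ ih => rw [hFrec, hFrec, ih]
  exact tendsto_nhds_unique hz
    (hw.congr' ((eventually_ge_atTop m).mono fun n hn => (hfrom n hn).symm))

end ForwardIterates

theorem stmt_9_general
    (f F : ℕ → ℂ → ℂ) (Flim : ℂ → ℂ)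
    (hf : ∀ n : ℕ, IsHolSelfMap (f (n + 1)))
    (hF0 : ∀ z, F 0 z = z)
    (hFrec : ∀ n z, F (n + 1) z = f (n + 1) (F n z))
    (hconv : TendstoLocallyUniformlyOn F Flim atTop unitDisk)
    (hnc : ∃ z ∈ unitDisk, ∃ w ∈ unitDisk, Flim z ≠ Flim w) :
    Monotone (fun n : ℕ => ordAt (fun z => F (n + 1) z - F (n + 1) 0) 0) ∧
    (∃ N : ℕ, ∀ n ≥ N, ordAt (fun z => F (n + 1) z - F (n + 1) 0) 0 =
        ordAt (fun z => Flim z - Flim 0) 0) := by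
  have hFhol := isHolSelfMap_of_forward_iterates hf hF0 hFrec
  have hFan n : AnalyticOnNhd ℂ (F n) unitDisk := (hFhol n).1.analyticOnNhd isOpen_ball
  have hFlim : AnalyticOnNhd ℂ Flim unitDisk :=
    (hconv.differentiableOn (.of_forall fun n => (hFhol n).1) isOpen_ball).analyticOnNhd
      isOpen_ball
  have h0 : (0 : ℂ) ∈ unitDisk := mem_ball_self one_pos
  have hord n : ordAt (fun z => F n z - F n 0) 0 = analyticOrderAt (fun z => F n z - F n 0) 0 :=
    ordAt_eq_analyticOrderAt ((hFan n 0 h0).sub analyticAt_const)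
  rw [ordAt_eq_analyticOrderAt (g := fun z => Flim z - Flim 0) ((hFlim 0 h0).sub analyticAt_const)]
  simp only [hord]
  refine ⟨monotone_nat_of_le_succ fun n => ?_, ?_⟩
  · simp only [hFrec (n + 1)]
    exact analyticOrderAt_sub_self_le_comp
      ((hf (n + 1)).1.analyticOnNhd isOpen_ball _ ((hFhol (n + 1)).2 h0)) (hFan (n + 1) 0 h0)
  · obtain ⟨z, hz, w, hw, hzw⟩ := hnc
    have hzeros n x (hx : x ∈ unitDisk) (hn : F n x - F n 0 = 0) : Flim x - Flim 0 = 0 :=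
      sub_eq_zero.mpr (eq_of_tendsto_forward_iterates hFrec
        (hconv.tendsto_at hx) (hconv.tendsto_at h0) (sub_eq_zero.mp hn))
    have hGconv : TendstoLocallyUniformlyOn (fun n x => F n x - F n 0)
        (fun x => Flim x - Flim 0) atTop unitDisk :=
      hconv.sub ((hconv.tendsto_at h0).tendstoUniformlyOn_const _).tendstoLocallyUniformlyOn
    obtain ⟨N, hN⟩ := eventually_atTop.mp
      (eventually_analyticOrderAt_eq_of_tendstoLocallyUniformlyOn isOpen_ball h0 hGconv
        (.of_forall fun n => (hFhol n).1.sub_const _) (.of_forall hzeros)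
        (hFlim.analyticOrderAt_sub_self_ne_top (convex_ball _ _).isPreconnected h0 hz hw hzw))
    exact ⟨N, fun n hn => hN (n + 1) (by omega)⟩

/-- With forward iterates `F n` converging locally uniformly to a
nonconstant holomorphic self-map `Flim`, the sequence `K n := ord_0 (F n - F n 0)` is
nondecreasing and eventually equal to `K := ord_0 (Flim - Flim 0)`. -/
theorem stmt_9
    (f F : ℕ → ℂ → ℂ) (Flim : ℂ → ℂ)
    (hf : ∀ n : ℕ, IsHolSelfMap (f (n + 1)))
    (hF0 : ∀ z, F 0 z = z)
    (hFrec : ∀ n z, F (n + 1) z = f (n + 1) (F n z))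
    (hFlim : IsHolSelfMap Flim)
    (hconv : TendstoLocallyUniformlyOn F Flim atTop unitDisk)
    (hnc : ∃ z ∈ unitDisk, ∃ w ∈ unitDisk, Flim z ≠ Flim w) :
    Monotone (fun n : ℕ => ordAt (fun z => F (n + 1) z - F (n + 1) 0) 0) ∧
    (∃ N : ℕ, ∀ n ≥ N, ordAt (fun z => F (n + 1) z - F (n + 1) 0) 0 =
        ordAt (fun z => Flim z - Flim 0) 0) :=
  stmt_9_general f F Flim hf hF0 hFrec hconv hnc
end
end
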